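/- arXiv:2005.01337 — 2 statements merged into one kernel-verified Lean document; each statement's English description precedes it below -/
import Mathlib

section
/- Let N be Poisson distributed with parameter kλt, let (X_i)_{i≥1} be i.i.d. uniform on {1,…,k}, and let (Y_i)_{i≥1} be i.i.d. square-integrable real random variables, with N, (X_i), (Y_i) mutually independent. Set Z(t) = ∑_{i=1}^{∑_{j=1}^{N} X_j} Y_i. Then Var[Z(t)] − 𝔼[Z(t)] = (k(k+1)/2) · λ t · [ 𝔼[Y_1²] − 𝔼[Y_1] + ((2k+1)/3 − 1) · (𝔼[Y_1])² ]. -/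
open MeasureTheory ProbabilityTheory
open scoped ENNReal NNReal

/-- Codomains for the joint family `(N, (X i), (Y i))`. -/
def mixCodom : Unit ⊕ ℕ ⊕ ℕ → Type
  | .inl _ => ℕ
  | .inr (.inl _) => ℕ
  | .inr (.inr _) => ℝ

instance mixCodomMS : ∀ i, MeasurableSpace (mixCodom i)
  | .inl _ => inferInstanceAs (MeasurableSpace ℕ)
  | .inr (.inl _) => inferInstanceAs (MeasurableSpace ℕ)
  | .inr (.inr _) => inferInstanceAs (MeasurableSpace ℝ)

/-- The family consisting of `N`, the `X i` and the `Y i`, viewed as a single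
indexed family of random variables; `iIndepFun` of this family expresses the mutual
independence of `N`, `(X i)_{i}` and `(Y i)_{i}`. -/
def mixFam {Ω : Type*} (N : Ω → ℕ) (X : ℕ → Ω → ℕ) (Y : ℕ → Ω → ℝ) :
    ∀ i : Unit ⊕ ℕ ⊕ ℕ, Ω → mixCodom i
  | .inl _ => N
  | .inr (.inl j) => X j
  | .inr (.inr j) => Y j

/-!
Both layers of `Z(t)` are random sums `∑_{i < M} Yᵢ` of i.i.d. square-integrable summands whose
number `M` is independent of them. The joint law of `M` and the summand sequence is then a
product, so Fubini amounts to conditioning on `M = m`, which gives Wald's identities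
`𝔼 Z = 𝔼 Y · 𝔼 M` and `Var Z = (𝔼 Y)² Var M + Var Y · 𝔼 M`. For the inner sum
`N⁽ᵏ⁾(t) = ∑_{j < N} Xⱼ`, with `N` Poisson of mean `r = kλt` (so `𝔼 N = Var N = r`, from
`𝔼[N f(N)] = r 𝔼[f(N + 1)]`) and `X` uniform on `{1, …, k}`, this gives `𝔼 N⁽ᵏ⁾ = r (k + 1)/2`
and `Var N⁽ᵏ⁾ = r 𝔼 X² = r (k + 1)(2k + 1)/6`; applying Wald once more to `Z(t)` leaves a
polynomial identity.
-/

section CountableIndex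

variable {α : Type*} [MeasurableSpace α] [Countable α] [MeasurableSingletonClass α]

theorem integral_countable_eq_tsum {ν : Measure α} [IsFiniteMeasure ν] (f : α → ℝ) :
    ∫ a, f a ∂ν = ∑' a, ν.real {a} * f a := by
  have h := integral_sum_dirac (f := f) (x := id) (fun a => measure_ne_top ν {a})
  simpa [Measure.sum_smul_dirac, measureReal_def] using h

theorem integrable_countable_iff {ν : Measure α} [IsFiniteMeasure ν] {f : α → ℝ} :
    Integrable f ν ↔ Summable fun a => ν.real {a} * |f a| := by
  have h := integrable_sum_dirac_iff (f := f) (x := id) (fun a => measure_ne_top ν {a})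
  simpa [Measure.sum_smul_dirac, measureReal_def] using h

theorem hasSum_integral_countable {ν : Measure α} [IsFiniteMeasure ν] {f : α → ℝ}
    (hf : Integrable f ν) : HasSum (fun a => ν.real {a} * f a) (∫ a, f a ∂ν) := by
  rw [integral_countable_eq_tsum]
  refine Summable.hasSum (.of_norm ?_)
  simpa [abs_mul, abs_of_nonneg measureReal_nonneg] using integrable_countable_iff.1 hf

variable {Ω β : Type*} {mΩ : MeasurableSpace Ω} [MeasurableSpace β] {P : Measure Ω}
  [IsFiniteMeasure P] {M : Ω → α} {V : Ω → β}

theorem integral_comp_countable_eq_tsum (hM : Measurable M) (f : α → ℝ) :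
    ∫ ω, f (M ω) ∂P = ∑' a, P.real (M ⁻¹' {a}) * f a := by
  simp [← integral_map hM.aemeasurable .of_discrete, integral_countable_eq_tsum,
    map_measureReal_apply hM (measurableSet_singleton _)]

theorem integrable_comp_countable_iff (hM : Measurable M) {f : α → ℝ} :
    Integrable (fun ω => f (M ω)) P ↔ Summable fun a => P.real (M ⁻¹' {a}) * |f a| := by
  have h := integrable_countable_iff (ν := P.map M) (f := f)
  rw [integrable_map_measure .of_discrete hM.aemeasurable] at h
  simpa [map_measureReal_apply hM (measurableSet_singleton _), Function.comp_def] using h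

theorem hasSum_integral_comp_countable (hM : Measurable M) {f : α → ℝ}
    (hf : Integrable (fun ω => f (M ω)) P) :
    HasSum (fun a => P.real (M ⁻¹' {a}) * f a) (∫ ω, f (M ω) ∂P) := by
  have hlaw : Integrable f (P.map M) := (integrable_map_measure .of_discrete hM.aemeasurable).2 hf
  simpa [map_measureReal_apply hM (measurableSet_singleton _),
    integral_map hM.aemeasurable .of_discrete] using hasSum_integral_countable hlaw

theorem hasSum_integral_comp_of_indepFun (hM : Measurable M) (hV : Measurable V)
    (hMV : IndepFun M V P) {g : α → β → ℝ} (hg : ∀ a, Measurable (g a))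
    (hint : Integrable (fun ω => g (M ω) (V ω)) P) :
    HasSum (fun a => P.real (M ⁻¹' {a}) * ∫ ω, g a (V ω) ∂P) (∫ ω, g (M ω) (V ω) ∂P) := by
  have hG : Measurable fun p : α × β => g p.1 p.2 := measurable_from_prod_countable_right hg
  have hlaw := (indepFun_iff_map_prod_eq_prod_map_map hM.aemeasurable hV.aemeasurable).1 hMV
  have hGint : Integrable (fun p : α × β => g p.1 p.2) ((P.map M).prod (P.map V)) := by
    rw [← hlaw]
    exact (integrable_map_measure hG.aestronglyMeasurable (hM.prodMk hV).aemeasurable).2 hint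
  rw [← integral_map (hM.prodMk hV).aemeasurable hG.aestronglyMeasurable, hlaw,
    integral_prod _ hGint]
  simpa [map_measureReal_apply hM (measurableSet_singleton _),
    integral_map hV.aemeasurable (hg _).aestronglyMeasurable]
    using hasSum_integral_countable hGint.integral_prod_left

theorem integrable_comp_of_indepFun (hM : Measurable M) (hV : Measurable V)
    (hMV : IndepFun M V P) {g : α → β → ℝ} (hg : ∀ a, Measurable (g a))
    (hint : ∀ a, Integrable (fun ω => g a (V ω)) P)
    (hsum : Summable fun a => P.real (M ⁻¹' {a}) * ∫ ω, |g a (V ω)| ∂P) :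
    Integrable (fun ω => g (M ω) (V ω)) P := by
  have hG : Measurable fun p : α × β => g p.1 p.2 := measurable_from_prod_countable_right hg
  have hlaw := (indepFun_iff_map_prod_eq_prod_map_map hM.aemeasurable hV.aemeasurable).1 hMV
  refine (integrable_map_measure hG.aestronglyMeasurable (hM.prodMk hV).aemeasurable).1 ?_
  rw [hlaw, integrable_prod_iff hG.aestronglyMeasurable]
  refine ⟨.of_forall fun a => ?_, integrable_countable_iff.2 ?_⟩
  · exact (integrable_map_measure (hg a).aestronglyMeasurable hV.aemeasurable).2 (hint a)
  · have habs : ∀ a, Measurable fun b => |g a b| := fun a => (hg a).abs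
    simpa [map_measureReal_apply hM (measurableSet_singleton _),
      integral_map hV.aemeasurable (habs _).aestronglyMeasurable,
      abs_of_nonneg (integral_nonneg fun _ => abs_nonneg _)] using hsum

end CountableIndex

section Independence

variable {Ω : Type*} {mΩ : MeasurableSpace Ω} {P : Measure Ω}

theorem identDistrib_of_measure_preimage_singleton {α : Type*} [MeasurableSpace α] [Countable α]
    [MeasurableSingletonClass α] {W W' : Ω → α} (hW : Measurable W) (hW' : Measurable W')
    (h : ∀ a, P (W ⁻¹' {a}) = P (W' ⁻¹' {a})) : IdentDistrib W W' P P where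
  aemeasurable_fst := hW.aemeasurable
  aemeasurable_snd := hW'.aemeasurable
  map_eq := Measure.ext_of_singleton fun a => by
    rw [Measure.map_apply hW (measurableSet_singleton a),
      Measure.map_apply hW' (measurableSet_singleton a), h]

theorem ProbabilityTheory.iIndepFun.indepFun_of_measurable_biSup {ι : Type*} {β : ι → Type*}
    {mβ : ∀ i, MeasurableSpace (β i)} {f : ∀ i, Ω → β i} (hf : ∀ i, Measurable (f i))
    (h : iIndepFun f P) {S T : Set ι} (hST : Disjoint S T) {γ δ : Type*} [MeasurableSpace γ]
    [MeasurableSpace δ] {g : Ω → γ} {g' : Ω → δ}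
    (hg : Measurable[⨆ i ∈ S, (mβ i).comap (f i)] g)
    (hg' : Measurable[⨆ i ∈ T, (mβ i).comap (f i)] g') : IndepFun g g' P := by
  rw [IndepFun_iff_Indep]
  exact indep_of_indep_of_le_right (indep_of_indep_of_le_left
    (indep_iSup_of_disjoint (fun i => (hf i).comap_le) h.iIndep hST) hg.comap_le) hg'.comap_le

theorem measurable_biSup_comap {ι : Type*} {β : ι → Type*} {mβ : ∀ i, MeasurableSpace (β i)}
    (f : ∀ i, Ω → β i) {S : Set ι} {i : ι} (hi : i ∈ S) :
    Measurable[⨆ j ∈ S, (mβ j).comap (f j)] (f i) :=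
  Measurable.of_comap_le (le_biSup (fun j => (mβ j).comap (f j)) hi)

end Independence

section RandomSum

open Finset

variable {Ω : Type*} {mΩ : MeasurableSpace Ω} {P : Measure Ω} {M : Ω → ℕ}

theorem measurable_randomSum {E : Type*} [AddCommMonoid E] [MeasurableSpace E]
    [MeasurableAdd₂ E] {Y : ℕ → Ω → E} (hM : Measurable M) (hY : ∀ i, Measurable (Y i)) :
    Measurable fun ω => ∑ i ∈ range (M ω), Y i ω := by
  have hsum : Measurable fun p : ℕ × (ℕ → E) => ∑ i ∈ range p.1, p.2 i :=
    measurable_from_prod_countable_right fun m =>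
      Finset.measurable_sum (range m) fun i _ => measurable_pi_apply i
  exact hsum.comp (hM.prodMk (measurable_pi_lambda _ hY))

variable {Y : ℕ → Ω → ℝ}

theorem integral_sum_range_of_identDistrib (hident : ∀ i, IdentDistrib (Y i) (Y 0) P P)
    (hY0 : Integrable (Y 0) P) (m : ℕ) :
    ∫ ω, ∑ i ∈ range m, Y i ω ∂P = m * ∫ ω, Y 0 ω ∂P := by
  rw [integral_finsetSum _ fun i _ => (hident i).symm.integrable_snd hY0]
  simp [fun i => (hident i).integral_eq]

variable [IsProbabilityMeasure P]

theorem integral_sum_range_sq_of_identDistrib (hident : ∀ i, IdentDistrib (Y i) (Y 0) P P)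
    (hY0 : MemLp (Y 0) 2 P) (hpair : Pairwise fun i j => IndepFun (Y i) (Y j) P) (m : ℕ) :
    ∫ ω, (∑ i ∈ range m, Y i ω) ^ 2 ∂P
      = m ^ 2 * (∫ ω, Y 0 ω ∂P) ^ 2 + m * variance (Y 0) P := by
  have hmem : ∀ i, MemLp (Y i) 2 P := fun i => (hident i).symm.memLp_snd hY0
  have hvar := IndepFun.variance_sum (s := range m) (fun i _ => hmem i)
    fun i _ j _ hij => hpair hij
  rw [variance_eq_sub (memLp_finsetSum' _ fun i _ => hmem i)] at hvar
  simp only [Finset.sum_apply, Pi.pow_apply, fun i => (hident i).variance_eq, sum_const,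
    card_range, nsmul_eq_mul] at hvar
  rw [integral_sum_range_of_identDistrib hident (hY0.integrable one_le_two)] at hvar
  linear_combination hvar

theorem integrable_randomSum_sq (hM : Measurable M) (hM2 : MemLp (fun ω => (M ω : ℝ)) 2 P)
    (hY : ∀ i, Measurable (Y i)) (hident : ∀ i, IdentDistrib (Y i) (Y 0) P P)
    (hY0 : MemLp (Y 0) 2 P) (hpair : Pairwise fun i j => IndepFun (Y i) (Y j) P)
    (hMY : IndepFun M (fun ω i => Y i ω) P) :
    Integrable (fun ω => (∑ i ∈ range (M ω), Y i ω) ^ 2) P := by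
  have hsq : ∀ m, Measurable fun y : ℕ → ℝ => (∑ i ∈ range m, y i) ^ 2 := fun m =>
    (Finset.measurable_sum (range m) fun i _ => measurable_pi_apply i).pow_const 2
  refine integrable_comp_of_indepFun (g := fun m y => (∑ i ∈ range m, y i) ^ 2) hM
    (measurable_pi_lambda _ hY) hMY hsq
    (fun m => (memLp_finsetSum _ fun i _ => (hident i).symm.memLp_snd hY0).integrable_sq) ?_
  simp only [abs_pow, sq_abs, integral_sum_range_sq_of_identDistrib hident hY0 hpair]
  have h2 := (integrable_comp_countable_iff hM (f := fun m => (m : ℝ) ^ 2)).1 hM2.integrable_sq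
  have h1 := (integrable_comp_countable_iff hM).1 (hM2.integrable one_le_two)
  refine ((h2.mul_left ((∫ ω, Y 0 ω ∂P) ^ 2)).add (h1.mul_left (variance (Y 0) P))).congr
    fun m => ?_
  simp only [abs_pow, Nat.abs_cast]
  ring

theorem memLp_randomSum (hM : Measurable M) (hM2 : MemLp (fun ω => (M ω : ℝ)) 2 P)
    (hY : ∀ i, Measurable (Y i)) (hident : ∀ i, IdentDistrib (Y i) (Y 0) P P)
    (hY0 : MemLp (Y 0) 2 P) (hpair : Pairwise fun i j => IndepFun (Y i) (Y j) P)
    (hMY : IndepFun M (fun ω i => Y i ω) P) : MemLp (fun ω => ∑ i ∈ range (M ω), Y i ω) 2 P :=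
  (memLp_two_iff_integrable_sq (measurable_randomSum hM hY).aestronglyMeasurable).2
    (integrable_randomSum_sq hM hM2 hY hident hY0 hpair hMY)

theorem integral_randomSum (hM : Measurable M) (hM2 : MemLp (fun ω => (M ω : ℝ)) 2 P)
    (hY : ∀ i, Measurable (Y i)) (hident : ∀ i, IdentDistrib (Y i) (Y 0) P P)
    (hY0 : MemLp (Y 0) 2 P) (hpair : Pairwise fun i j => IndepFun (Y i) (Y j) P)
    (hMY : IndepFun M (fun ω i => Y i ω) P) :
    ∫ ω, ∑ i ∈ range (M ω), Y i ω ∂P = (∫ ω, Y 0 ω ∂P) * ∫ ω, (M ω : ℝ) ∂P := by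
  have h := hasSum_integral_comp_of_indepFun (g := fun m y => ∑ i ∈ range m, y i) hM
    (measurable_pi_lambda _ hY) hMY
    (fun m => Finset.measurable_sum (range m) fun i _ => measurable_pi_apply i)
    ((memLp_randomSum hM hM2 hY hident hY0 hpair hMY).integrable one_le_two)
  simp only [integral_sum_range_of_identDistrib hident (hY0.integrable one_le_two)] at h
  refine h.unique (((hasSum_integral_comp_countable hM (hM2.integrable one_le_two)).mul_left
    (∫ ω, Y 0 ω ∂P)).congr_fun fun m => by ring)

theorem integral_randomSum_sq (hM : Measurable M) (hM2 : MemLp (fun ω => (M ω : ℝ)) 2 P)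
    (hY : ∀ i, Measurable (Y i)) (hident : ∀ i, IdentDistrib (Y i) (Y 0) P P)
    (hY0 : MemLp (Y 0) 2 P) (hpair : Pairwise fun i j => IndepFun (Y i) (Y j) P)
    (hMY : IndepFun M (fun ω i => Y i ω) P) :
    ∫ ω, (∑ i ∈ range (M ω), Y i ω) ^ 2 ∂P
      = (∫ ω, Y 0 ω ∂P) ^ 2 * ∫ ω, (M ω : ℝ) ^ 2 ∂P + variance (Y 0) P * ∫ ω, (M ω : ℝ) ∂P := by
  have h := hasSum_integral_comp_of_indepFun (g := fun m y => (∑ i ∈ range m, y i) ^ 2) hM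
    (measurable_pi_lambda _ hY) hMY
    (fun m => (Finset.measurable_sum (range m) fun i _ => measurable_pi_apply i).pow_const 2)
    (integrable_randomSum_sq hM hM2 hY hident hY0 hpair hMY)
  simp only [integral_sum_range_sq_of_identDistrib hident hY0 hpair] at h
  have hsq := hasSum_integral_comp_countable hM (f := fun m => (m : ℝ) ^ 2) hM2.integrable_sq
  have hlin := hasSum_integral_comp_countable hM (hM2.integrable one_le_two)
  refine h.unique (((hsq.mul_left ((∫ ω, Y 0 ω ∂P) ^ 2)).add
    (hlin.mul_left (variance (Y 0) P))).congr_fun fun m => by ring)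

theorem variance_randomSum (hM : Measurable M) (hM2 : MemLp (fun ω => (M ω : ℝ)) 2 P)
    (hY : ∀ i, Measurable (Y i)) (hident : ∀ i, IdentDistrib (Y i) (Y 0) P P)
    (hY0 : MemLp (Y 0) 2 P) (hpair : Pairwise fun i j => IndepFun (Y i) (Y j) P)
    (hMY : IndepFun M (fun ω i => Y i ω) P) :
    variance (fun ω => ∑ i ∈ range (M ω), Y i ω) P
      = (∫ ω, Y 0 ω ∂P) ^ 2 * variance (fun ω => (M ω : ℝ)) P
        + variance (Y 0) P * ∫ ω, (M ω : ℝ) ∂P := by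
  rw [variance_eq_sub (memLp_randomSum hM hM2 hY hident hY0 hpair hMY), variance_eq_sub hM2]
  simp only [Pi.pow_apply]
  rw [integral_randomSum_sq hM hM2 hY hident hY0 hpair hMY,
    integral_randomSum hM hM2 hY hident hY0 hpair hMY]
  ring

end RandomSum

section Poisson

open Real
open scoped Nat

theorem hasSum_poisson_mul_natCast_mul (r : ℝ≥0) {f : ℕ → ℝ} {a : ℝ}
    (h : HasSum (fun n => exp (-r) * r ^ n / n ! * f (n + 1)) a) :
    HasSum (fun n => exp (-r) * r ^ n / n ! * (n * f n)) (r * a) := by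
  refine (hasSum_nat_add_iff' 1).1 ?_
  simp only [Finset.sum_range_one, Nat.cast_zero, zero_mul, mul_zero, sub_zero]
  refine (h.mul_left (r : ℝ)).congr_fun fun n => ?_
  rw [Nat.factorial_succ]
  push_cast
  field_simp
  ring

theorem hasSum_poisson_mul_natCast (r : ℝ≥0) :
    HasSum (fun n => exp (-r) * r ^ n / n ! * n) r := by
  have h := hasSum_poisson_mul_natCast_mul r (f := fun _ => 1)
    (by simpa using hasSum_one_poissonMeasure r)
  simpa only [mul_one] using h

theorem hasSum_poisson_mul_natCast_sq (r : ℝ≥0) :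
    HasSum (fun n => exp (-r) * r ^ n / n ! * (n : ℝ) ^ 2) (r * (r + 1)) := by
  have h := (hasSum_poisson_mul_natCast r).add (hasSum_one_poissonMeasure r)
  simpa [sq] using hasSum_poisson_mul_natCast_mul r (f := fun n => (n : ℝ))
    (by simpa [mul_add] using h)

variable {Ω : Type*} {mΩ : MeasurableSpace Ω} {P : Measure Ω} [IsProbabilityMeasure P]
  {N : Ω → ℕ} {r : ℝ≥0}

theorem integral_comp_of_poisson (hN : Measurable N)
    (hlaw : ∀ n, P (N ⁻¹' {n}) = poissonMeasure r {n}) (f : ℕ → ℝ) :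
    ∫ ω, f (N ω) ∂P = ∑' n, exp (-r) * r ^ n / n ! * f n := by
  simp [integral_comp_countable_eq_tsum hN, measureReal_def, hlaw,
    ← poissonMeasure_real_singleton]

theorem memLp_natCast_of_poisson (hN : Measurable N)
    (hlaw : ∀ n, P (N ⁻¹' {n}) = poissonMeasure r {n}) :
    MemLp (fun ω => (N ω : ℝ)) 2 P := by
  refine (memLp_two_iff_integrable_sq
    ((measurable_of_countable _).comp hN).aestronglyMeasurable).2 ?_
  refine (integrable_comp_countable_iff hN (f := fun n => (n : ℝ) ^ 2)).2 ?_
  simpa [measureReal_def, hlaw, ← poissonMeasure_real_singleton]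
    using (hasSum_poisson_mul_natCast_sq r).summable

theorem integral_natCast_of_poisson (hN : Measurable N)
    (hlaw : ∀ n, P (N ⁻¹' {n}) = poissonMeasure r {n}) :
    ∫ ω, (N ω : ℝ) ∂P = r := by
  rw [integral_comp_of_poisson hN hlaw, (hasSum_poisson_mul_natCast r).tsum_eq]

theorem variance_natCast_of_poisson (hN : Measurable N)
    (hlaw : ∀ n, P (N ⁻¹' {n}) = poissonMeasure r {n}) :
    variance (fun ω => (N ω : ℝ)) P = r := by
  rw [variance_eq_sub (memLp_natCast_of_poisson hN hlaw)]
  simp only [Pi.pow_apply]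
  rw [integral_comp_of_poisson hN hlaw (fun n => (n : ℝ) ^ 2),
    (hasSum_poisson_mul_natCast_sq r).tsum_eq, integral_natCast_of_poisson hN hlaw]
  ring

end Poisson

section CompoundPoisson

open Finset

variable {Ω : Type*} {mΩ : MeasurableSpace Ω} {P : Measure Ω} [IsProbabilityMeasure P]
  {N : Ω → ℕ} {r : ℝ≥0} {Y : ℕ → Ω → ℝ}

theorem integral_randomSum_of_poisson (hN : Measurable N)
    (hlaw : ∀ n, P (N ⁻¹' {n}) = poissonMeasure r {n}) (hY : ∀ i, Measurable (Y i))
    (hident : ∀ i, IdentDistrib (Y i) (Y 0) P P) (hY0 : MemLp (Y 0) 2 P)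
    (hpair : Pairwise fun i j => IndepFun (Y i) (Y j) P) (hNY : IndepFun N (fun ω i => Y i ω) P) :
    ∫ ω, ∑ i ∈ range (N ω), Y i ω ∂P = r * ∫ ω, Y 0 ω ∂P := by
  rw [integral_randomSum hN (memLp_natCast_of_poisson hN hlaw) hY hident hY0 hpair hNY,
    integral_natCast_of_poisson hN hlaw, mul_comm]

theorem variance_randomSum_of_poisson (hN : Measurable N)
    (hlaw : ∀ n, P (N ⁻¹' {n}) = poissonMeasure r {n}) (hY : ∀ i, Measurable (Y i))
    (hident : ∀ i, IdentDistrib (Y i) (Y 0) P P) (hY0 : MemLp (Y 0) 2 P)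
    (hpair : Pairwise fun i j => IndepFun (Y i) (Y j) P) (hNY : IndepFun N (fun ω i => Y i ω) P) :
    variance (fun ω => ∑ i ∈ range (N ω), Y i ω) P = r * ∫ ω, Y 0 ω ^ 2 ∂P := by
  rw [variance_randomSum hN (memLp_natCast_of_poisson hN hlaw) hY hident hY0 hpair hNY,
    variance_natCast_of_poisson hN hlaw, integral_natCast_of_poisson hN hlaw, variance_eq_sub hY0]
  simp only [Pi.pow_apply]
  ring

end CompoundPoisson

section Uniform

open Finset

theorem sum_Icc_natCast (k : ℕ) : ∑ m ∈ Icc 1 k, (m : ℝ) = k * (k + 1) / 2 := by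
  induction k with
  | zero => simp
  | succ k ih => rw [sum_Icc_succ_top (by omega), ih]; push_cast; ring

theorem sum_Icc_natCast_sq (k : ℕ) :
    ∑ m ∈ Icc 1 k, (m : ℝ) ^ 2 = k * (k + 1) * (2 * k + 1) / 6 := by
  induction k with
  | zero => simp
  | succ k ih => rw [sum_Icc_succ_top (by omega), ih]; push_cast; ring

variable {Ω : Type*} {mΩ : MeasurableSpace Ω} {P : Measure Ω} {W : Ω → ℕ} {k : ℕ}

theorem measureReal_preimage_of_uniform
    (hlaw : ∀ m, P (W ⁻¹' {m}) = if 1 ≤ m ∧ m ≤ k then (k : ℝ≥0∞)⁻¹ else 0) (m : ℕ) :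
    P.real (W ⁻¹' {m}) = if m ∈ Icc 1 k then (k : ℝ)⁻¹ else 0 := by
  simp only [measureReal_def, hlaw, mem_Icc]
  split_ifs <;> simp

variable [IsProbabilityMeasure P]

theorem integral_comp_of_uniform (hW : Measurable W)
    (hlaw : ∀ m, P (W ⁻¹' {m}) = if 1 ≤ m ∧ m ≤ k then (k : ℝ≥0∞)⁻¹ else 0) (f : ℕ → ℝ) :
    ∫ ω, f (W ω) ∂P = (∑ m ∈ Icc 1 k, f m) / k := by
  rw [integral_comp_countable_eq_tsum hW, tsum_eq_sum (s := Icc 1 k) fun m hm => by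
    simp [measureReal_preimage_of_uniform hlaw, hm], sum_div]
  exact sum_congr rfl fun m hm => by simp [measureReal_preimage_of_uniform hlaw, hm, div_eq_inv_mul]

theorem memLp_natCast_of_uniform (hW : Measurable W)
    (hlaw : ∀ m, P (W ⁻¹' {m}) = if 1 ≤ m ∧ m ≤ k then (k : ℝ≥0∞)⁻¹ else 0) :
    MemLp (fun ω => (W ω : ℝ)) 2 P := by
  refine (memLp_two_iff_integrable_sq
    ((measurable_of_countable _).comp hW).aestronglyMeasurable).2 ?_
  refine (integrable_comp_countable_iff hW (f := fun m => (m : ℝ) ^ 2)).2 ?_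
  exact summable_of_ne_finset_zero (s := Icc 1 k) fun m hm => by
    simp [measureReal_preimage_of_uniform hlaw, hm]

theorem integral_natCast_of_uniform (hk : k ≠ 0) (hW : Measurable W)
    (hlaw : ∀ m, P (W ⁻¹' {m}) = if 1 ≤ m ∧ m ≤ k then (k : ℝ≥0∞)⁻¹ else 0) :
    ∫ ω, (W ω : ℝ) ∂P = (k + 1) / 2 := by
  rw [integral_comp_of_uniform hW hlaw, sum_Icc_natCast]
  field_simp

theorem integral_natCast_sq_of_uniform (hk : k ≠ 0) (hW : Measurable W)
    (hlaw : ∀ m, P (W ⁻¹' {m}) = if 1 ≤ m ∧ m ≤ k then (k : ℝ≥0∞)⁻¹ else 0) :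
    ∫ ω, (W ω : ℝ) ^ 2 ∂P = (k + 1) * (2 * k + 1) / 6 := by
  rw [integral_comp_of_uniform hW hlaw (fun m => (m : ℝ) ^ 2), sum_Icc_natCast_sq]
  field_simp

end Uniform

section MixFam

open Finset

variable {Ω : Type*} {mΩ : MeasurableSpace Ω} {P : Measure Ω} {N : Ω → ℕ} {X : ℕ → Ω → ℕ}
  {Y : ℕ → Ω → ℝ}

theorem measurable_mixFam (hN : Measurable N) (hX : ∀ i, Measurable (X i))
    (hY : ∀ i, Measurable (Y i)) : ∀ i, Measurable (mixFam N X Y i)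
  | .inl _ => hN
  | .inr (.inl j) => hX j
  | .inr (.inr j) => hY j

theorem indepFun_jumps_of_iIndepFun_mixFam (hN : Measurable N) (hX : ∀ i, Measurable (X i))
    (hY : ∀ i, Measurable (Y i)) (hindep : iIndepFun (mixFam N X Y) P) :
    IndepFun N (fun ω j => X j ω) P :=
  hindep.indepFun_of_measurable_biSup (measurable_mixFam hN hX hY)
    (S := {.inl ()}) (T := Set.range fun j => .inr (.inl j)) (by simp)
    (measurable_biSup_comap (mixFam N X Y) (i := .inl ()) rfl) (by
      -- `measurable_pi_lambda` takes the σ-algebra on `Ω` as an instance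
      let _ := ⨆ i ∈ Set.range fun j => Sum.inr (Sum.inl j), (mixCodomMS i).comap (mixFam N X Y i)
      exact measurable_pi_lambda _ fun j =>
        measurable_biSup_comap (mixFam N X Y) (i := .inr (.inl j)) ⟨j, rfl⟩)

theorem indepFun_marks_of_iIndepFun_mixFam (hN : Measurable N) (hX : ∀ i, Measurable (X i))
    (hY : ∀ i, Measurable (Y i)) (hindep : iIndepFun (mixFam N X Y) P) :
    IndepFun (fun ω => ∑ j ∈ range (N ω), X j ω) (fun ω i => Y i ω) P :=
  hindep.indepFun_of_measurable_biSup (measurable_mixFam hN hX hY)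
    (S := (Set.range fun i => .inr (.inr i))ᶜ) (T := Set.range fun i => .inr (.inr i))
    disjoint_compl_left
    (measurable_randomSum (measurable_biSup_comap (mixFam N X Y) (i := .inl ()) (by simp))
      fun j => measurable_biSup_comap (mixFam N X Y) (i := .inr (.inl j)) (by simp)) (by
      let _ := ⨆ i ∈ Set.range fun j => Sum.inr (Sum.inr j), (mixCodomMS i).comap (mixFam N X Y i)
      exact measurable_pi_lambda _ fun i =>
        measurable_biSup_comap (mixFam N X Y) (i := .inr (.inr i)) ⟨i, rfl⟩)

end MixFam

section PoissonOfOrder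

open Finset

variable {Ω : Type*} {mΩ : MeasurableSpace Ω} {P : Measure Ω} [IsProbabilityMeasure P]
  {N : Ω → ℕ} {X : ℕ → Ω → ℕ}

theorem moments_sum_jumps_of_poisson_uniform {k : ℕ} (hk : k ≠ 0) {r : ℝ≥0}
    (hN : Measurable N) (hNlaw : ∀ n, P (N ⁻¹' {n}) = poissonMeasure r {n})
    (hX : ∀ j, Measurable (X j))
    (hXlaw : ∀ j m, P (X j ⁻¹' {m}) = if 1 ≤ m ∧ m ≤ k then (k : ℝ≥0∞)⁻¹ else 0)
    (hXpair : Pairwise fun i j => IndepFun (X i) (X j) P)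
    (hNX : IndepFun N (fun ω j => X j ω) P) :
    MemLp (fun ω => ((∑ j ∈ range (N ω), X j ω : ℕ) : ℝ)) 2 P
      ∧ ∫ ω, ((∑ j ∈ range (N ω), X j ω : ℕ) : ℝ) ∂P = r * ((k + 1) / 2)
      ∧ variance (fun ω => ((∑ j ∈ range (N ω), X j ω : ℕ) : ℝ)) P
        = r * ((k + 1) * (2 * k + 1) / 6) := by
  set Xr : ℕ → Ω → ℝ := fun j ω => X j ω
  have hcast : (fun ω => ((∑ j ∈ range (N ω), X j ω : ℕ) : ℝ))
      = fun ω => ∑ j ∈ range (N ω), Xr j ω := by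
    ext ω
    push_cast
    rfl
  have hcast_meas : Measurable (Nat.cast : ℕ → ℝ) := measurable_of_countable _
  have hXr : ∀ j, Measurable (Xr j) := fun j => hcast_meas.comp (hX j)
  have hident : ∀ j, IdentDistrib (Xr j) (Xr 0) P P := fun j =>
    (identDistrib_of_measure_preimage_singleton (hX j) (hX 0) fun m => by
      rw [hXlaw, hXlaw]).comp hcast_meas
  have hX0 : MemLp (Xr 0) 2 P := memLp_natCast_of_uniform (hX 0) (hXlaw 0)
  have hpair : Pairwise fun i j => IndepFun (Xr i) (Xr j) P := fun i j hij =>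
    (hXpair hij).comp hcast_meas hcast_meas
  have hNXr : IndepFun N (fun ω j => Xr j ω) P :=
    hNX.comp measurable_id (measurable_pi_lambda _ fun j => hcast_meas.comp (measurable_pi_apply j))
  rw [hcast]
  refine ⟨memLp_randomSum hN (memLp_natCast_of_poisson hN hNlaw) hXr hident hX0 hpair hNXr,
    ?_, ?_⟩
  · rw [integral_randomSum_of_poisson hN hNlaw hXr hident hX0 hpair hNXr,
      integral_natCast_of_uniform hk (hX 0) (hXlaw 0)]
  · rw [variance_randomSum_of_poisson hN hNlaw hXr hident hX0 hpair hNXr,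
      integral_natCast_sq_of_uniform hk (hX 0) (hXlaw 0)]

end PoissonOfOrder

/-- **Index-of-dispersion identity for the compound Poisson process of order `k`:**
`Var[Z(t)] − 𝔼[Z(t)] = (k(k+1)/2) λ t (𝔼[Y₁²] − 𝔼[Y₁] + ((2k+1)/3 − 1) (𝔼[Y₁])²)`. -/
theorem cppok_dispersion_identity
    {Ω : Type*} [MeasurableSpace Ω] (P : Measure Ω) [IsProbabilityMeasure P]
    (k : ℕ) (hk : 1 ≤ k) (lam t : ℝ) (hlam : 0 < lam) (ht : 0 < t)
    (N : Ω → ℕ) (X : ℕ → Ω → ℕ) (Y : ℕ → Ω → ℝ)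
    (hNmeas : Measurable N) (hXmeas : ∀ i, Measurable (X i))
    (hYmeas : ∀ i, Measurable (Y i))
    -- `N` is Poisson distributed with parameter `k λ t`
    (hNdist : ∀ n : ℕ, P {ω | N ω = n}
      = ENNReal.ofReal (Real.exp (-((k : ℝ) * lam * t)) * ((k : ℝ) * lam * t) ^ n
          / (Nat.factorial n : ℝ)))
    -- each `X i` is uniformly distributed on `{1, …, k}`
    (hXdist : ∀ i, ∀ m : ℕ,
      P {ω | X i ω = m} = if 1 ≤ m ∧ m ≤ k then ((k : ℝ≥0∞))⁻¹ else 0)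
    -- the `Y i` are identically distributed and square-integrable
    (hYident : ∀ i, IdentDistrib (Y i) (Y 0) P P)
    (hYsq : MemLp (Y 0) 2 P)
    -- `N`, `(X i)` and `(Y i)` are mutually independent
    (hindep : iIndepFun (mixFam N X Y) P) :
    variance (fun ω => ∑ i ∈ Finset.range (∑ j ∈ Finset.range (N ω), X j ω), Y i ω) P
        - ∫ ω, (∑ i ∈ Finset.range (∑ j ∈ Finset.range (N ω), X j ω), Y i ω) ∂P
      = ((k : ℝ) * ((k : ℝ) + 1) / 2) * lam * t
          * ((∫ ω, (Y 0 ω) ^ 2 ∂P) - (∫ ω, Y 0 ω ∂P)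
              + ((2 * (k : ℝ) + 1) / 3 - 1) * (∫ ω, Y 0 ω ∂P) ^ 2) := by
  let r : ℝ≥0 := ⟨k * lam * t, by positivity⟩
  have hr : (r : ℝ) = k * lam * t := rfl
  have hNlaw : ∀ n, P (N ⁻¹' {n}) = poissonMeasure r {n} := fun n =>
    (hNdist n).trans (poissonMeasure_singleton r n).symm
  have hXpair : Pairwise fun i j => IndepFun (X i) (X j) P := fun i j hij =>
    hindep.indepFun (i := .inr (.inl i)) (j := .inr (.inl j)) (by simpa using hij)
  have hYpair : Pairwise fun i j => IndepFun (Y i) (Y j) P := fun i j hij =>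
    hindep.indepFun (i := .inr (.inr i)) (j := .inr (.inr j)) (by simpa using hij)
  obtain ⟨hS, hSmean, hSvar⟩ := moments_sum_jumps_of_poisson_uniform (by omega) hNmeas hNlaw
    hXmeas hXdist hXpair (indepFun_jumps_of_iIndepFun_mixFam hNmeas hXmeas hYmeas hindep)
  have hSY := indepFun_marks_of_iIndepFun_mixFam hNmeas hXmeas hYmeas hindep
  rw [variance_randomSum (measurable_randomSum hNmeas hXmeas) hS hYmeas hYident hYsq hYpair hSY,
    integral_randomSum (measurable_randomSum hNmeas hXmeas) hS hYmeas hYident hYsq hYpair hSY,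
    hSvar, hSmean, hr, variance_eq_sub hYsq]
  simp only [Pi.pow_apply]
  ring
end

section
/- Let N be Poisson distributed with parameter kλt, let (X_i)_{i≥1} be i.i.d. uniform on {1,…,k}, and let (Y_i)_{i≥1} be i.i.d. ℕ-valued random variables with pmf q (ℙ[Y_i = n] = q_n), all mutually independent. Set Z(t) = ∑_{i=1}^{∑_{j=1}^{N} X_j} Y_i. Then for every u ∈ [0,1], 𝔼[u^{Z(t)}] = exp( λt · ( ∑_{m=1}^{k} G_Y(u)^m ) − kλt ), where G_Y(u) = 𝔼[u^{Y_1}] = ∑_{n=0}^{∞} q_n u^n. Equivalently, 𝔼[u^{Z(t)}] = exp( λkt · ∑_{j=0}^{∞} α_j (u^j − 1) ) with α_j = (1/k) ∑_{m=1}^{k} q^{*m}(j), where q^{*m} denotes the m-fold convolution of q. -/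
open MeasureTheory ProbabilityTheory
open scoped ENNReal NNReal

/-- `convPow q m` is the `m`-fold convolution `q^{*m}` of the pmf `q` on `ℕ`
(the pmf of the sum of `m` i.i.d. random variables with pmf `q`);
`q^{*0}` is the point mass at `0`. -/
noncomputable def convPow (q : ℕ → ℝ) : ℕ → ℕ → ℝ
  | 0 => fun j => if j = 0 then 1 else 0
  | m + 1 => fun j => ∑ i ∈ Finset.range (j + 1), q i * convPow q m (j - i)

/-!
Conditioning on the number of summands: if `C` is independent of i.i.d. `V i` with
`𝔼[c ^ V i] = g`, then `𝔼[c ^ (V 0 + ⋯ + V (C - 1))] = 𝔼[g ^ C]`. Applied first to `Z(t)`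
(with `C = X 0 + ⋯ + X (N - 1)`, `V = Y`) and then to that sum (with `C = N`, `V = X`), this
reduces `𝔼[u ^ Z(t)]` to `𝔼[r ^ N]` with `r = 𝔼[G_Y(u) ^ X 0] = k⁻¹ ∑_{m=1}^k G_Y(u) ^ m`, and
the Poisson generating function gives `exp (k λ t (r - 1))`. The second form follows from
`∑_j q^{*m}(j) u ^ j = G_Y(u) ^ m`, a Cauchy product, together with `∑_j q^{*m}(j) = 1`.
-/

open Finset

section NatValued

variable {Ω : Type*} {mΩ : MeasurableSpace Ω} {P : Measure Ω}

lemma abs_pow_le_one {c : ℝ} (hc : |c| ≤ 1) (n : ℕ) : |c ^ n| ≤ 1 := by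
  rw [abs_pow]
  exact pow_le_one₀ (abs_nonneg c) hc

lemma integral_comp_eq_tsum [IsFiniteMeasure P] {W : Ω → ℕ} (hW : Measurable W) {f : ℕ → ℝ}
    {B : ℝ} (hf : ∀ n, |f n| ≤ B) :
    ∫ ω, f (W ω) ∂P = ∑' n, P.real {ω | W ω = n} * f n := by
  have hint : Integrable f (P.map W) :=
    (integrable_const B).mono' measurable_from_nat.aestronglyMeasurable (ae_of_all _ hf)
  rw [← integral_map hW.aemeasurable hint.aestronglyMeasurable, integral_countable hint]
  refine tsum_congr fun n => ?_
  rw [map_measureReal_apply hW (measurableSet_singleton n), smul_eq_mul]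
  rfl

lemma abs_integral_pow_le_one [IsProbabilityMeasure P] {W : Ω → ℕ} {c : ℝ} (hc : |c| ≤ 1) :
    |∫ ω, c ^ W ω ∂P| ≤ 1 := by
  simpa using norm_integral_le_of_norm_le_const (μ := P) (f := fun ω => c ^ W ω) (C := 1)
    (ae_of_all _ fun ω => abs_pow_le_one hc _)

lemma hasSum_one_of_measure_eq_ofReal [IsProbabilityMeasure P] {W : Ω → ℕ} (hW : Measurable W)
    {p : ℕ → ℝ} (hp : ∀ n, 0 ≤ p n) (hWp : ∀ n, P {ω | W ω = n} = ENNReal.ofReal (p n)) :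
    HasSum p 1 := by
  have htotal : ∑' n, P (W ⁻¹' {n}) = 1 := by
    rw [← measure_iUnion (pairwise_disjoint_fiber W) fun n => hW (measurableSet_singleton n),
      ← Set.preimage_iUnion, Set.iUnion_of_singleton, Set.preimage_univ, measure_univ]
  have h := ENNReal.hasSum_toReal (htotal ▸ ENNReal.one_ne_top)
  rw [← ENNReal.tsum_toReal_eq fun n => measure_ne_top P _, htotal] at h
  simpa [Set.preimage, hWp, ENNReal.toReal_ofReal (hp _)] using h

lemma integral_pow_eq_tsum_of_measure_eq_ofReal [IsFiniteMeasure P] {W : Ω → ℕ}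
    (hW : Measurable W) {p : ℕ → ℝ} (hp : ∀ n, 0 ≤ p n)
    (hWp : ∀ n, P {ω | W ω = n} = ENNReal.ofReal (p n)) {u : ℝ} (hu : |u| ≤ 1) :
    ∫ ω, u ^ W ω ∂P = ∑' n, p n * u ^ n := by
  rw [integral_comp_eq_tsum hW (abs_pow_le_one hu)]
  simp_rw [measureReal_def, hWp, ENNReal.toReal_ofReal (hp _)]

lemma integral_comp_of_uniform_s10 [IsFiniteMeasure P] {X : Ω → ℕ} (hX : Measurable X) {k : ℕ}
    (hXk : ∀ m, P {ω | X ω = m} = if 1 ≤ m ∧ m ≤ k then (k : ℝ≥0∞)⁻¹ else 0)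
    {f : ℕ → ℝ} {B : ℝ} (hf : ∀ n, |f n| ≤ B) :
    ∫ ω, f (X ω) ∂P = (k : ℝ)⁻¹ * ∑ m ∈ Icc 1 k, f m := by
  rw [integral_comp_eq_tsum hX hf, tsum_eq_sum (s := Icc 1 k), mul_sum]
  · refine sum_congr rfl fun m hm => ?_
    rw [measureReal_def, hXk, if_pos (mem_Icc.mp hm), ENNReal.toReal_inv, ENNReal.toReal_natCast]
  · intro m hm
    rw [measureReal_def, hXk, if_neg (by simpa using hm), ENNReal.toReal_zero, zero_mul]

lemma integral_pow_of_poisson [IsFiniteMeasure P] {N : Ω → ℕ} (hN : Measurable N) {a : ℝ}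
    (ha : 0 ≤ a)
    (hNa : ∀ n, P {ω | N ω = n} = ENNReal.ofReal (Real.exp (-a) * a ^ n / n.factorial))
    {r : ℝ} (hr : |r| ≤ 1) :
    ∫ ω, r ^ N ω ∂P = Real.exp (a * (r - 1)) := by
  have hterm : ∀ n : ℕ, P.real {ω | N ω = n} * r ^ n
      = Real.exp (-a) * ((a * r) ^ n / n.factorial) := fun n => by
    rw [measureReal_def, hNa, ENNReal.toReal_ofReal (by positivity)]
    ring
  rw [integral_comp_eq_tsum hN (abs_pow_le_one hr), tsum_congr hterm,
    ((NormedSpace.expSeries_div_hasSum_exp (a * r)).mul_left _).tsum_eq, ← Real.exp_eq_exp_ℝ,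
    ← Real.exp_add]
  ring_nf

end NatValued

section Independence

variable {Ω ι : Type*} {mΩ : MeasurableSpace Ω} {P : Measure Ω} {β : ι → Type*}
  {mβ : ∀ i, MeasurableSpace (β i)} {F : ∀ i, Ω → β i}

lemma ProbabilityTheory.iIndepFun.indepFun_of_measurable_iSup (hF : iIndepFun F P)
    (hFm : ∀ i, Measurable (F i)) {S T : Set ι} (hST : Disjoint S T)
    {γ δ : Type*} [MeasurableSpace γ] [MeasurableSpace δ] {f : Ω → γ} {g : Ω → δ}
    (hf : Measurable[⨆ i ∈ S, (mβ i).comap (F i)] f)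
    (hg : Measurable[⨆ i ∈ T, (mβ i).comap (F i)] g) : IndepFun f g P :=
  (IndepFun_iff_Indep f g P).mpr <| indep_of_indep_of_le_right
    (indep_of_indep_of_le_left
      (indep_iSup_of_disjoint (fun i => (hFm i).comap_le) ((iIndepFun_iff_iIndep _ _ _).mp hF)
        hST)
      hf.comap_le) hg.comap_le

lemma measurable_iSup_comap_of_mem {S : Set ι} {i : ι} (hi : i ∈ S) :
    Measurable[⨆ j ∈ S, (mβ j).comap (F j)] (F i) :=
  Measurable.of_comap_le (le_iSup₂ (f := fun j (_ : j ∈ S) => (mβ j).comap (F j)) i hi)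

end Independence

section RandomSums

variable {Ω : Type*} {mΩ : MeasurableSpace Ω} {P : Measure Ω}

def randomSum (C : Ω → ℕ) (V : ℕ → Ω → ℕ) (ω : Ω) : ℕ := ∑ i ∈ range (C ω), V i ω

lemma measurable_randomSum_s10 {C : Ω → ℕ} {V : ℕ → Ω → ℕ} (hC : Measurable C)
    (hV : ∀ i, Measurable (V i)) : Measurable (randomSum C V) :=
  (measurable_from_prod_countable_left (f := fun p : Ω × ℕ => ∑ i ∈ range p.2, V i p.1)
    fun n => Finset.measurable_sum (range n) fun i _ => hV i).comp (measurable_id.prodMk hC)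

lemma integral_pow_sum_range [IsProbabilityMeasure P] {V : ℕ → Ω → ℕ}
    (hV : ∀ i, Measurable (V i)) (hVind : iIndepFun V P) {c g : ℝ}
    (hg : ∀ i, ∫ ω, c ^ V i ω ∂P = g) (n : ℕ) :
    ∫ ω, c ^ (∑ i ∈ range n, V i ω) ∂P = g ^ n := by
  induction n with
  | zero => simp
  | succ n ih =>
    have hpow : Measurable fun m : ℕ => c ^ m := measurable_from_nat
    have hind := (hVind.indepFun_sum_range_succ hV n).comp hpow hpow
    simp only [Function.comp_def, Finset.sum_apply] at hind
    calc ∫ ω, c ^ (∑ i ∈ range (n + 1), V i ω) ∂P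
        = ∫ ω, c ^ (∑ i ∈ range n, V i ω) * c ^ V n ω ∂P := by
          simp_rw [sum_range_succ, pow_add]
      _ = g ^ n * g := by
          rw [hind.integral_fun_mul_eq_mul_integral
            (hpow.comp (Finset.measurable_sum _ fun i _ => hV i)).aestronglyMeasurable
            (hpow.comp (hV n)).aestronglyMeasurable, ih, hg]
      _ = g ^ (n + 1) := (pow_succ g n).symm

lemma integral_comp_randomSum [IsFiniteMeasure P] {C : Ω → ℕ} {V : ℕ → Ω → ℕ}
    (hC : Measurable C) (hV : ∀ i, Measurable (V i))
    (hCV : ∀ n, IndepFun C (fun ω => ∑ i ∈ range n, V i ω) P) {f : ℕ → ℝ} {B : ℝ}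
    (hf : ∀ n, |f n| ≤ B) :
    ∫ ω, f (randomSum C V ω) ∂P
      = ∑' n, P.real {ω | C ω = n} * ∫ ω, f (∑ i ∈ range n, V i ω) ∂P := by
  have hfC : Integrable (fun ω => f (randomSum C V ω)) P :=
    (integrable_const B).mono'
      (measurable_from_nat.comp (measurable_randomSum_s10 hC hV)).aestronglyMeasurable
      (ae_of_all _ fun ω => hf _)
  rw [← setIntegral_univ, ← Set.preimage_univ (f := C), ← Set.iUnion_of_singleton,
    Set.preimage_iUnion, integral_iUnion (fun n => hC (measurableSet_singleton n))
      (pairwise_disjoint_fiber C) hfC.integrableOn]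
  refine tsum_congr fun n => ?_
  -- on the fibre `C = n` the random sum is the fixed sum over `range n`, independent of the fibre
  rw [setIntegral_congr_fun (hC (measurableSet_singleton n))
    fun ω (hω : C ω = n) => by rw [randomSum, hω]]
  exact ((IndepFun_iff_Indep _ _ _).mp (hCV n)).setIntegral_eq_mul hC.comap_le
    (Finset.measurable_sum _ fun i _ => hV i).aemeasurable ⟨{n}, measurableSet_singleton n, rfl⟩
    measurable_from_nat.aestronglyMeasurable

lemma integral_pow_randomSum [IsProbabilityMeasure P] {C : Ω → ℕ} {V : ℕ → Ω → ℕ}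
    (hC : Measurable C) (hV : ∀ i, Measurable (V i)) (hVind : iIndepFun V P)
    (hCV : ∀ n, IndepFun C (fun ω => ∑ i ∈ range n, V i ω) P) {c g : ℝ} (hc : |c| ≤ 1)
    (hg : ∀ i, ∫ ω, c ^ V i ω ∂P = g) :
    ∫ ω, c ^ randomSum C V ω ∂P = ∫ ω, g ^ C ω ∂P := by
  have hg1 : |g| ≤ 1 := hg 0 ▸ abs_integral_pow_le_one hc
  rw [integral_comp_randomSum hC hV hCV (abs_pow_le_one hc),
    integral_comp_eq_tsum hC (abs_pow_le_one hg1)]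
  simp_rw [integral_pow_sum_range hV hVind hg]

end RandomSums

section Convolution

variable {q : ℕ → ℝ} {u : ℝ}

lemma convPow_succ_mul_pow (m j : ℕ) :
    convPow q (m + 1) j * u ^ j
      = ∑ i ∈ range (j + 1), q i * u ^ i * (convPow q m (j - i) * u ^ (j - i)) := by
  rw [convPow, sum_mul]
  refine sum_congr rfl fun i hi => ?_
  rw [← pow_sub_mul_pow u (Nat.le_of_lt_succ (mem_range.mp hi))]
  ring

lemma summable_norm_convPow_mul_pow (hq : Summable fun n => ‖q n * u ^ n‖) (m : ℕ) :
    Summable fun j => ‖convPow q m j * u ^ j‖ := by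
  induction m with
  | zero =>
    refine summable_of_ne_finset_zero (s := {0}) fun j hj => ?_
    simp [convPow, (by simpa using hj : j ≠ 0)]
  | succ m ih =>
    simpa only [convPow_succ_mul_pow] using summable_norm_sum_mul_range_of_summable_norm hq ih

lemma hasSum_convPow_mul_pow (hq : Summable fun n => ‖q n * u ^ n‖) (m : ℕ) :
    HasSum (fun j => convPow q m j * u ^ j) ((∑' n, q n * u ^ n) ^ m) := by
  induction m with
  | zero =>
    rw [pow_zero]
    convert hasSum_ite_eq 0 (1 : ℝ) using 1
    ext j
    by_cases hj : j = 0 <;> simp [convPow, hj]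
  | succ m ih =>
    have hsum := (summable_norm_convPow_mul_pow hq (m + 1)).of_norm
    rw [pow_succ', ← ih.tsum_eq, tsum_mul_tsum_eq_tsum_sum_range_of_summable_norm hq
      (summable_norm_convPow_mul_pow hq m)]
    simpa only [convPow_succ_mul_pow] using hsum.hasSum

lemma hasSum_mean_convPow_mul_pow_sub_one (hq : ∀ n, 0 ≤ q n) (hq1 : HasSum q 1)
    (hu0 : 0 ≤ u) (hu1 : u ≤ 1) {k : ℕ} (hk : k ≠ 0) :
    HasSum (fun j => ((1 / (k : ℝ)) * ∑ m ∈ Icc 1 k, convPow q m j) * (u ^ j - 1))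
      ((k : ℝ)⁻¹ * ∑ m ∈ Icc 1 k, (∑' n, q n * u ^ n) ^ m - 1) := by
  have hqv : ∀ v : ℝ, 0 ≤ v → v ≤ 1 → Summable fun n => ‖q n * v ^ n‖ := fun v hv0 hv1 =>
    hq1.summable.of_nonneg_of_le (fun _ => norm_nonneg _) fun n => by
      rw [norm_mul, Real.norm_of_nonneg (hq n), norm_pow, Real.norm_of_nonneg hv0]
      exact mul_le_of_le_one_right (hq n) (pow_le_one₀ hv0 hv1)
  have h := (hasSum_sum fun m (_ : m ∈ Icc 1 k) =>
    (hasSum_convPow_mul_pow (hqv u hu0 hu1) m).sub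
      (hasSum_convPow_mul_pow (hqv 1 zero_le_one le_rfl) m)).mul_left (1 / (k : ℝ))
  rw [show (∑' n, q n * 1 ^ n) = 1 by simpa using hq1.tsum_eq] at h
  have hterm : ∀ j, ((1 / (k : ℝ)) * ∑ m ∈ Icc 1 k, convPow q m j) * (u ^ j - 1)
      = 1 / k * ∑ m ∈ Icc 1 k, (convPow q m j * u ^ j - convPow q m j * 1 ^ j) := fun j => by
    rw [mul_assoc, sum_mul]
    simp only [one_pow, mul_one, mul_sub]
  have hval : 1 / (k : ℝ) * ∑ m ∈ Icc 1 k, ((∑' n, q n * u ^ n) ^ m - 1 ^ m)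
      = (k : ℝ)⁻¹ * ∑ m ∈ Icc 1 k, (∑' n, q n * u ^ n) ^ m - 1 := by
    have hk' : (k : ℝ) ≠ 0 := Nat.cast_ne_zero.mpr hk
    simp only [one_pow, sum_sub_distrib, sum_const, Nat.card_Icc, nsmul_eq_mul, mul_one,
      Nat.add_sub_cancel]
    field_simp
  simpa only [hterm, hval] using h

end Convolution

section CompoundModel

variable {Ω : Type*} {mΩ : MeasurableSpace Ω} {P : Measure Ω} {N : Ω → ℕ} {X Y : ℕ → Ω → ℕ}

lemma measurable_sumElim (hN : Measurable N) (hX : ∀ j, Measurable (X j))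
    (hY : ∀ i, Measurable (Y i)) :
    ∀ i, Measurable (Sum.elim (fun _ : Unit => N) (Sum.elim X Y) i)
  | .inl _ => hN
  | .inr (.inl j) => hX j
  | .inr (.inr i) => hY i

lemma ProbabilityTheory.iIndepFun.of_sumElim_inr_inl
    (hind : iIndepFun (Sum.elim (fun _ : Unit => N) (Sum.elim X Y)) P) : iIndepFun X P :=
  hind.precomp (g := fun j => Sum.inr (Sum.inl j)) fun _ _ h => by simpa using h

lemma ProbabilityTheory.iIndepFun.of_sumElim_inr_inr
    (hind : iIndepFun (Sum.elim (fun _ : Unit => N) (Sum.elim X Y)) P) : iIndepFun Y P :=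
  hind.precomp (g := fun i => Sum.inr (Sum.inr i)) fun _ _ h => by simpa using h

lemma indepFun_sum_range_of_iIndepFun_sumElim (hN : Measurable N) (hX : ∀ j, Measurable (X j))
    (hY : ∀ i, Measurable (Y i))
    (hind : iIndepFun (Sum.elim (fun _ : Unit => N) (Sum.elim X Y)) P) (n : ℕ) :
    IndepFun N (fun ω => ∑ j ∈ range n, X j ω) P := by
  set F := Sum.elim (fun _ : Unit => N) (Sum.elim X Y)
  refine hind.indepFun_of_measurable_iSup (measurable_sumElim hN hX hY) (S := {Sum.inl ()})
    (T := {Sum.inl ()}ᶜ) disjoint_compl_right ?_ ?_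
  · exact measurable_iSup_comap_of_mem (F := F) (Set.mem_singleton (Sum.inl ()))
  · exact Finset.measurable_sum _ fun j _ =>
      measurable_iSup_comap_of_mem (F := F) (i := Sum.inr (Sum.inl j)) (by simp)

lemma indepFun_randomSum_sum_range_of_iIndepFun_sumElim (hN : Measurable N)
    (hX : ∀ j, Measurable (X j)) (hY : ∀ i, Measurable (Y i))
    (hind : iIndepFun (Sum.elim (fun _ : Unit => N) (Sum.elim X Y)) P) (n : ℕ) :
    IndepFun (randomSum N X) (fun ω => ∑ i ∈ range n, Y i ω) P := by
  set F := Sum.elim (fun _ : Unit => N) (Sum.elim X Y)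
  set T := Set.range fun i => (Sum.inr (Sum.inr i) : Unit ⊕ ℕ ⊕ ℕ)
  refine hind.indepFun_of_measurable_iSup (measurable_sumElim hN hX hY) (S := Tᶜ) (T := T)
    disjoint_compl_left ?_ ?_
  · exact measurable_randomSum_s10
      (measurable_iSup_comap_of_mem (F := F) (i := Sum.inl ()) (by simp [T]))
      fun j => measurable_iSup_comap_of_mem (F := F) (i := Sum.inr (Sum.inl j)) (by simp [T])
  · exact Finset.measurable_sum _ fun i _ =>
      measurable_iSup_comap_of_mem (F := F) (i := Sum.inr (Sum.inr i)) ⟨i, rfl⟩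

end CompoundModel

/-- **Probability generating function of the compound Poisson process of order `k`**
with ℕ-valued compounding variables: for `u ∈ [0,1]`,
`𝔼[u^{Z(t)}] = exp(λ t ∑_{m=1}^k G_Y(u)^m − k λ t)` where `G_Y(u) = ∑_n q_n u^n`;
equivalently `𝔼[u^{Z(t)}] = exp(k λ t ∑_j α_j (u^j − 1))` with
`α_j = (1/k) ∑_{m=1}^k q^{*m}(j)`. -/
theorem cppok_pgf
    {Ω : Type*} [MeasurableSpace Ω] (P : Measure Ω) [IsProbabilityMeasure P]
    (k : ℕ) (hk : 1 ≤ k) (lam t : ℝ) (hlam : 0 < lam) (ht : 0 < t)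
    (N : Ω → ℕ) (X : ℕ → Ω → ℕ) (Y : ℕ → Ω → ℕ)
    (hNmeas : Measurable N) (hXmeas : ∀ i, Measurable (X i))
    (hYmeas : ∀ i, Measurable (Y i))
    (q : ℕ → ℝ) (hq : ∀ n, 0 ≤ q n)
    -- `N` is Poisson distributed with parameter `k λ t`
    (hNdist : ∀ n : ℕ, P {ω | N ω = n}
      = ENNReal.ofReal (Real.exp (-((k : ℝ) * lam * t)) * ((k : ℝ) * lam * t) ^ n
          / (Nat.factorial n : ℝ)))
    -- each `X i` is uniformly distributed on `{1, …, k}`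
    (hXdist : ∀ i, ∀ m : ℕ,
      P {ω | X i ω = m} = if 1 ≤ m ∧ m ≤ k then ((k : ℝ≥0∞))⁻¹ else 0)
    -- each `Y i` has pmf `q`
    (hYdist : ∀ i, ∀ n : ℕ, P {ω | Y i ω = n} = ENNReal.ofReal (q n))
    -- `N`, `(X i)` and `(Y i)` are mutually independent
    (hindep : iIndepFun
      (Sum.elim (fun _ : Unit => N) (Sum.elim X Y)) P) :
    ∀ u : ℝ, 0 ≤ u → u ≤ 1 →
      (∫ ω, u ^ (∑ i ∈ Finset.range (∑ j ∈ Finset.range (N ω), X j ω), Y i ω) ∂P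
          = Real.exp (lam * t * (∑ m ∈ Finset.Icc 1 k, (∑' n : ℕ, q n * u ^ n) ^ m)
              - (k : ℝ) * lam * t))
      ∧ (∫ ω, u ^ (∑ i ∈ Finset.range (∑ j ∈ Finset.range (N ω), X j ω), Y i ω) ∂P
          = Real.exp ((k : ℝ) * lam * t *
              ∑' j : ℕ, ((1 / (k : ℝ)) * ∑ m ∈ Finset.Icc 1 k, convPow q m j)
                * (u ^ j - 1))) := by
  intro u hu0 hu1
  have hu : |u| ≤ 1 := abs_le.mpr ⟨by linarith, hu1⟩
  set G := ∑' n : ℕ, q n * u ^ n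
  have hEY : ∀ i, ∫ ω, u ^ Y i ω ∂P = G := fun i =>
    integral_pow_eq_tsum_of_measure_eq_ofReal (hYmeas i) hq (hYdist i) hu
  have hG : |G| ≤ 1 := hEY 0 ▸ abs_integral_pow_le_one hu
  set r := (k : ℝ)⁻¹ * ∑ m ∈ Finset.Icc 1 k, G ^ m with hr_def
  have hEX : ∀ j, ∫ ω, G ^ X j ω ∂P = r := fun j =>
    integral_comp_of_uniform_s10 (hXmeas j) (hXdist j) (abs_pow_le_one hG)
  have hr : |r| ≤ 1 := hEX 0 ▸ abs_integral_pow_le_one hG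
  have hZ : ∫ ω, u ^ randomSum (randomSum N X) Y ω ∂P = Real.exp (k * lam * t * (r - 1)) :=
    calc ∫ ω, u ^ randomSum (randomSum N X) Y ω ∂P
        = ∫ ω, G ^ randomSum N X ω ∂P :=
          integral_pow_randomSum (measurable_randomSum_s10 hNmeas hXmeas) hYmeas
            hindep.of_sumElim_inr_inr
            (indepFun_randomSum_sum_range_of_iIndepFun_sumElim hNmeas hXmeas hYmeas hindep) hu hEY
      _ = ∫ ω, r ^ N ω ∂P :=
          integral_pow_randomSum hNmeas hXmeas
            hindep.of_sumElim_inr_inl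
            (indepFun_sum_range_of_iIndepFun_sumElim hNmeas hXmeas hYmeas hindep) hG hEX
      _ = Real.exp (k * lam * t * (r - 1)) :=
          integral_pow_of_poisson hNmeas (by positivity) hNdist hr
  have hk : k ≠ 0 := by omega
  refine ⟨hZ.trans ?_, hZ.trans ?_⟩
  · rw [hr_def]
    congr 1
    field_simp
  · rw [(hasSum_mean_convPow_mul_pow_sub_one hq
      (hasSum_one_of_measure_eq_ofReal (hYmeas 0) hq (hYdist 0)) hu0 hu1 hk).tsum_eq]
end
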